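/- arXiv:1205.3517 — 4 statements merged into one kernel-verified Lean document; each statement's English description precedes it below -/
import Mathlib

section
/- Fix t ∈ (0,1) and let μ(x) = e^{−1}·(x+t)·(1 + t/x)^{x/t} for x ∈ (0, 1−t). Then μ(x) > 0 for all x ∈ (0, 1−t), and μ is strictly monotonically increasing on (0, 1−t). -/
/-!
The identric mean of `x` and `x + t` is the Lagrangian mean for `H = negMulLog`: since
`H' = -log - 1`, it equals `exp (-(1 + s))` where `s` is the slope of `H` over `[x, x + t]`.
Because `H` is strictly concave, that slope strictly decreases as the window `[x, x + t]` slides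
to the right, so the identric mean strictly increases.
-/

/-- The identric mean of `x` and `x + t`:
`μ(x) = e⁻¹ (x+t) (1 + t/x)^(x/t)`. -/
noncomputable def identric (t x : ℝ) : ℝ :=
  (Real.exp 1)⁻¹ * (x + t) * (1 + t / x) ^ (x / t)

open Real Set

section SlidingSecant

variable {𝕜 : Type*} [Field 𝕜] [LinearOrder 𝕜] [IsStrictOrderedRing 𝕜] {s : Set 𝕜} {f : 𝕜 → 𝕜}

theorem StrictConcaveOn.slope_add_lt_slope_add (hf : StrictConcaveOn 𝕜 s f) {t x y : 𝕜}
    (ht : 0 < t) (hx : x ∈ s) (hyt : y + t ∈ s) (hxy : x < y) :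
    slope f y (y + t) < slope f x (x + t) := by
  have hxt : x + t ∈ s := hf.1.ordConnected.out hx hyt ⟨by linarith, by linarith⟩
  have hy : y ∈ s := hf.1.ordConnected.out hx hyt ⟨hxy.le, by linarith⟩
  -- `slope f x (y + t)` lies between the two: move the right end point, then the left one.
  calc slope f y (y + t) = slope f (y + t) y := slope_comm f _ _
    _ < slope f (y + t) x := by
      simpa only [slope_def_field] using
        hf.secant_strict_mono hyt hx hy (by linarith) (by linarith) hxy
    _ = slope f x (y + t) := slope_comm f _ _
    _ < slope f x (x + t) := by
      simpa only [slope_def_field] using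
        hf.secant_strict_mono hx hxt hyt (by linarith) (by linarith) (by linarith)

end SlidingSecant

theorem identric_eq_exp_slope_negMulLog {t x : ℝ} (ht : 0 < t) (hx : 0 < x) :
    identric t x = exp (-(1 + slope negMulLog x (x + t))) := by
  have hxt : 0 < x + t := by linarith
  have hlog : log (1 + t / x) = log (x + t) - log x := by
    rw [show 1 + t / x = (x + t) / x by field_simp, log_div hxt.ne' hx.ne']
  have hexponent : -(1 + (negMulLog (x + t) - negMulLog x) / t) =
      -1 + log (x + t) + (log (x + t) - log x) * (x / t) := by
    simp only [negMulLog]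
    field_simp
    ring
  rw [identric, rpow_def_of_pos (by positivity), hlog, slope_def_field, add_sub_cancel_left,
    hexponent, exp_add, exp_add, exp_log hxt, exp_neg]

theorem identric_pos {t x : ℝ} (ht : 0 < t) (hx : 0 < x) : 0 < identric t x := by
  rw [identric_eq_exp_slope_negMulLog ht hx]
  exact exp_pos _

theorem identric_strictMonoOn {t : ℝ} (ht : 0 < t) : StrictMonoOn (identric t) (Ioi 0) := by
  intro x hx y hy hxy
  rw [identric_eq_exp_slope_negMulLog ht hx, identric_eq_exp_slope_negMulLog ht hy, exp_lt_exp,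
    neg_lt_neg_iff, add_lt_add_iff_left]
  exact strictConcaveOn_negMulLog.slope_add_lt_slope_add ht (mem_Ici.2 (le_of_lt hx))
    (mem_Ici.2 (add_pos hy ht).le) hxy

/-- Parts (i) of lemma "lollipop": for fixed `t ∈ (0,1)`, the function
`μ(x) = e⁻¹ (x+t) (1 + t/x)^(x/t)` is positive and strictly monotonically
increasing on `(0, 1 - t)`. -/
theorem identric_pos_and_strictMonoOn (t : ℝ) (ht : t ∈ Set.Ioo (0 : ℝ) 1) :
    (∀ x ∈ Set.Ioo (0 : ℝ) (1 - t), 0 < identric t x) ∧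
    StrictMonoOn (identric t) (Set.Ioo (0 : ℝ) (1 - t)) :=
  ⟨fun _ hx => identric_pos ht.1 hx.1, (identric_strictMonoOn ht.1).mono Ioo_subset_Ioi_self⟩
end

section
/- Fix t ∈ (0,1) and let μ(x) = e^{−1}·(x+t)·(1 + t/x)^{x/t} for x ∈ (0, 1−t). Then μ is strictly concave on (0, 1−t). -/
open Real Set

theorem strictConcaveOn_of_hasDerivAt2_neg {D : Set ℝ} (hD : Convex ℝ D) (hD' : IsOpen D)
    {f f' f'' : ℝ → ℝ} (hf : ∀ x ∈ D, HasDerivAt f (f' x) x)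
    (hf' : ∀ x ∈ D, HasDerivAt f' (f'' x) x) (hf'' : ∀ x ∈ D, f'' x < 0) :
    StrictConcaveOn ℝ D f := by
  refine StrictAntiOn.strictConcaveOn_of_deriv hD
    (fun x hx ↦ (hf x hx).continuousAt.continuousWithinAt) ?_
  rw [hD'.interior_eq]
  have hanti : StrictAntiOn f' D := strictAntiOn_of_hasDerivWithinAt_neg hD
    (fun x hx ↦ (hf' x hx).continuousAt.continuousWithinAt)
    (fun x hx ↦ (hf' x (interior_subset hx)).hasDerivWithinAt)
    (fun x hx ↦ hf'' x (interior_subset hx))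
  intro x hx y hy hxy
  rw [(hf x hx).deriv, (hf y hy).deriv]
  exact hanti hx hy hxy

theorem strictConcaveOn_exp_comp {D : Set ℝ} (hD : Convex ℝ D) (hD' : IsOpen D)
    {g g' g'' : ℝ → ℝ} (hg : ∀ x ∈ D, HasDerivAt g (g' x) x)
    (hg' : ∀ x ∈ D, HasDerivAt g' (g'' x) x) (hg'' : ∀ x ∈ D, g'' x + g' x ^ 2 < 0) :
    StrictConcaveOn ℝ D fun x ↦ exp (g x) :=
  strictConcaveOn_of_hasDerivAt2_neg hD hD' (fun x hx ↦ (hg x hx).exp)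
    (f'' := fun x ↦ exp (g x) * (g'' x + g' x ^ 2))
    (fun x hx ↦ ((hg x hx).exp.mul (hg' x hx)).congr_deriv (by ring))
    (fun x hx ↦ mul_neg_of_pos_of_neg (exp_pos _) (hg'' x hx))

theorem identric_eq_exp {t x : ℝ} (ht : 0 < t) (hx : 0 < x) :
    identric t x = exp ((negMulLog x - negMulLog (x + t)) / t - 1) := by
  have hxt : 0 < x + t := by positivity
  have hexp : (negMulLog x - negMulLog (x + t)) / t - 1
      = log (x + t) + (log (x + t) - log x) * (x / t) - 1 := by
    simp only [negMulLog]
    field_simp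
    ring
  rw [identric, show 1 + t / x = (x + t) / x by field_simp, rpow_def_of_pos (by positivity),
    log_div hxt.ne' hx.ne', hexp, exp_sub, exp_add, exp_log hxt]
  ring

theorem log_sq_lt_sub_one_sq_div {c : ℝ} (hc : 0 < c) (hc₁ : c ≠ 1) :
    log c ^ 2 < (c - 1) ^ 2 / c := by
  set u := log c / 2
  have hu : u ≠ 0 := by simp [u, log_ne_zero_of_pos_of_ne_one hc hc₁]
  have hlog : log c = 2 * u := by ring
  have hc_eq : c = exp u ^ 2 := by
    rw [← exp_nat_mul, Nat.cast_ofNat, ← hlog, exp_log hc]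
  have hrhs : (c - 1) ^ 2 / c = (2 * sinh u) ^ 2 := by
    rw [sinh_eq, exp_neg, hc_eq]
    field_simp
  have hsinh : u ^ 2 < sinh u ^ 2 := by
    rw [sq_lt_sq, abs_sinh]
    exact self_lt_sinh_iff.mpr (abs_pos.mpr hu)
  rw [hrhs, hlog]
  nlinarith

theorem identric_strictConcaveOn_Ioi {t : ℝ} (ht : 0 < t) :
    StrictConcaveOn ℝ (Ioi 0) (identric t) := by
  have hg : ∀ x ∈ Ioi (0 : ℝ), HasDerivAt (fun y ↦ (negMulLog y - negMulLog (y + t)) / t - 1)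
      ((log (x + t) - log x) / t) x := by
    intro x (hx : 0 < x)
    have hxt : x + t ≠ 0 := by positivity
    exact ((((hasDerivAt_negMulLog hx.ne').sub
      ((hasDerivAt_negMulLog hxt).comp_add_const x t)).div_const t).sub_const 1).congr_deriv
      (by ring)
  have hg' : ∀ x ∈ Ioi (0 : ℝ), HasDerivAt (fun y ↦ (log (y + t) - log y) / t)
      (((x + t)⁻¹ - x⁻¹) / t) x := by
    intro x (hx : 0 < x)
    have hxt : x + t ≠ 0 := by positivity
    simpa using ((((hasDerivAt_id x).add_const t).log hxt).sub (hasDerivAt_log hx.ne')).div_const t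
  have hg'' : ∀ x ∈ Ioi (0 : ℝ),
      ((x + t)⁻¹ - x⁻¹) / t + ((log (x + t) - log x) / t) ^ 2 < 0 := by
    intro x (hx : 0 < x)
    have hxt : 0 < x + t := by positivity
    have hmean := log_sq_lt_sub_one_sq_div (c := (x + t) / x) (by positivity)
      (by rw [Ne, div_eq_one_iff_eq hx.ne']; linarith)
    rw [log_div hxt.ne' hx.ne', show ((x + t) / x - 1) ^ 2 / ((x + t) / x) = t ^ 2 / (x * (x + t))
      by field_simp; ring] at hmean
    rw [show ((x + t)⁻¹ - x⁻¹) / t + ((log (x + t) - log x) / t) ^ 2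
      = ((log (x + t) - log x) ^ 2 - t ^ 2 / (x * (x + t))) / t ^ 2 by field_simp; ring]
    exact div_neg_of_neg_of_pos (sub_neg.mpr hmean) (by positivity)
  exact (strictConcaveOn_exp_comp (convex_Ioi 0) isOpen_Ioi hg hg' hg'').congr
    fun x hx ↦ (identric_eq_exp ht hx).symm

/-- Part (ii) of lemma "lollipop": for fixed `t ∈ (0,1)`, the function
`μ(x) = e⁻¹ (x+t) (1 + t/x)^(x/t)` is strictly concave on `(0, 1 - t)`. -/
theorem identric_strictConcaveOn (t : ℝ) (ht : t ∈ Set.Ioo (0 : ℝ) 1) :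
    StrictConcaveOn ℝ (Set.Ioo (0 : ℝ) (1 - t)) (identric t) :=
  (identric_strictConcaveOn_Ioi ht.1).subset Ioo_subset_Ioi_self (convex_Ioo _ _)
end

section
/- Fix t ∈ (0,1) and let μ(x) = e^{−1}·(x+t)·(1 + t/x)^{x/t} for x ∈ (0, 1−t). Then for all x ∈ (0, 1−t), 1/e < (μ(x) − x)/t < 1/2; that is, the identric mean of x and x+t lies strictly between x + t/e and x + t/2. -/
/-!
Put `u = t / x`. Since `identric` is homogeneous of degree one, `(μ(x) - x) / t = (I(u) - 1) / u`
with `I(u) = identric u 1 = exp((1 + u) log (1 + u) / u - 1)`, so after taking logarithms the two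
bounds become `u log (e + u) < (1 + u) log (1 + u) < u (1 + log (1 + u / 2))` for `u > 0`.
Both sides of each inequality agree at `u = 0`, and the derivatives of their differences are
positive: for the lower bound by strict concavity of `log` between `1` and `e`, for the upper
bound by `log (1 + w) < w`.
-/

open Real Set

theorem lt_of_hasDerivAt_pos {f f' : ℝ → ℝ} {a b : ℝ}
    (hf : ∀ v, a ≤ v → HasDerivAt f (f' v) v) (hf' : ∀ v, a < v → 0 < f' v) (hab : a < b) :
    f a < f b := by
  have hmono : StrictMonoOn f (Ici a) := by
    refine strictMonoOn_of_deriv_pos (convex_Ici a)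
      (fun v hv => (hf v hv).continuousAt.continuousWithinAt) fun v hv => ?_
    rw [interior_Ici] at hv
    rw [(hf v hv.le).deriv]
    exact hf' v hv
  exact hmono self_mem_Ici hab.le hab

theorem mul_log_exp_one_add_lt {u : ℝ} (hu : 0 < u) :
    u * log (exp 1 + u) < (1 + u) * log (1 + u) := by
  have he := exp_pos 1
  have key := lt_of_hasDerivAt_pos
    (f := fun v => (1 + v) * log (1 + v) - v * log (exp 1 + v))
    (f' := fun v => log (1 + v) + 1 - log (exp 1 + v) - v / (exp 1 + v)) (fun v hv => ?_)
    (fun v hv => ?_) hu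
  · simpa using key
  · have h1 := ((hasDerivAt_id' v).const_add 1).log (by linarith)
    have h2 := ((hasDerivAt_id' v).const_add (exp 1)).log (by linarith)
    refine ((((hasDerivAt_id' v).const_add 1).mul h1).sub
      ((hasDerivAt_id' v).mul h2)).congr_deriv ?_
    field_simp
    ring
  · -- `e (1 + v) / (e + v) = (1 - w) • 1 + w • e` with `w = v / (e + v)`
    have hev : 0 < exp 1 + v := by linarith
    have hw : 0 < v / (exp 1 + v) := div_pos hv hev
    have hconc := strictConcaveOn_log_Ioi.2 (mem_Ioi.2 one_pos) (mem_Ioi.2 he)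
      (one_lt_exp_iff.2 one_pos).ne
      (by positivity : 0 < exp 1 / (exp 1 + v)) hw (by field_simp)
    simp only [smul_eq_mul, log_one, log_exp, mul_zero, mul_one, zero_add] at hconc
    have hpt : exp 1 / (exp 1 + v) + v / (exp 1 + v) * exp 1
        = exp 1 * (1 + v) / (exp 1 + v) := by field_simp
    rw [hpt, log_div (by positivity) hev.ne', log_mul he.ne' (by linarith), log_exp] at hconc
    linarith

theorem one_add_mul_log_lt {u : ℝ} (hu : 0 < u) :
    (1 + u) * log (1 + u) < u * (1 + log (1 + u / 2)) := by
  have key := lt_of_hasDerivAt_pos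
    (f := fun v => v * (1 + log (1 + v / 2)) - (1 + v) * log (1 + v))
    (f' := fun v => log (1 + v / 2) + v / (2 + v) - log (1 + v)) (fun v hv => ?_)
    (fun v hv => ?_) hu
  · simpa using key
  · have h1 := ((hasDerivAt_id' v).const_add 1).log (by linarith)
    have h2 := (((hasDerivAt_id' v).div_const 2).const_add 1).log (by linarith)
    refine (((hasDerivAt_id' v).mul (h2.const_add 1)).sub
      (((hasDerivAt_id' v).const_add 1).mul h1)).congr_deriv ?_
    field_simp
    ring
  · -- with `w = v / (2 + v)`, this is `log (1 + w) < w`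
    have hw := log_lt_sub_one_of_pos (x := (1 + v) / (1 + v / 2)) (by positivity)
      (by rw [ne_eq, div_eq_one_iff_eq (by positivity)]; linarith)
    have hpt : (1 + v) / (1 + v / 2) - 1 = v / (2 + v) := by field_simp; ring
    rw [hpt, log_div (by positivity) (by positivity)] at hw
    linarith

theorem mul_identric_div_one {t x : ℝ} (hx : x ≠ 0) :
    x * identric (t / x) 1 = identric t x := by
  simp only [identric, div_one, one_div_div]
  field_simp

theorem identric_one_eq_exp {u : ℝ} (hu : 0 < u) :
    identric u 1 = exp ((1 + u) * log (1 + u) / u - 1) := by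
  have h1u : 0 < 1 + u := by linarith
  have hexp : (1 + u) * log (1 + u) / u - 1 = log (1 + u) + log (1 + u) * (1 / u) - 1 := by
    field_simp
    ring
  rw [identric, div_one, rpow_def_of_pos h1u, hexp, exp_sub, exp_add, exp_log h1u]
  ring

theorem one_add_div_exp_one_lt_identric_one {u : ℝ} (hu : 0 < u) :
    1 + u / exp 1 < identric u 1 := by
  have he := exp_pos 1
  have hlow : 1 + u / exp 1 = exp (log (exp 1 + u) - 1) := by
    rw [exp_sub, exp_log (by linarith)]
    field_simp
  rw [hlow, identric_one_eq_exp hu, exp_lt_exp, sub_lt_sub_iff_right, lt_div_iff₀ hu, mul_comm]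
  exact mul_log_exp_one_add_lt hu

theorem identric_one_lt_one_add_half {u : ℝ} (hu : 0 < u) : identric u 1 < 1 + u / 2 := by
  rw [identric_one_eq_exp hu, ← exp_log (by positivity : 0 < 1 + u / 2), exp_lt_exp,
    sub_lt_iff_lt_add, div_lt_iff₀ hu]
  linarith [one_add_mul_log_lt hu]

/-- Part (iii) of lemma "lollipop": for fixed `t ∈ (0,1)` and `x ∈ (0, 1-t)`,
`1/e < (μ(x) - x)/t < 1/2`, i.e. the identric mean of `x` and `x + t` lies strictly
between `x + t/e` and `x + t/2`. -/
theorem identric_between (t : ℝ) (ht : t ∈ Set.Ioo (0 : ℝ) 1) :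
    ∀ x ∈ Set.Ioo (0 : ℝ) (1 - t),
      1 / Real.exp 1 < (identric t x - x) / t ∧ (identric t x - x) / t < 1 / 2 := by
  rintro x ⟨hx, -⟩
  have hu : 0 < t / x := div_pos ht.1 hx
  have hnorm : (identric t x - x) / t = (identric (t / x) 1 - 1) / (t / x) := by
    rw [← mul_identric_div_one hx.ne']
    field_simp
  rw [hnorm, lt_div_iff₀ hu, div_lt_iff₀ hu]
  constructor
  · rw [one_div_mul_eq_div]
    linarith [one_add_div_exp_one_lt_identric_one hu]
  · linarith [identric_one_lt_one_add_half hu]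
end

section
/- Let a > b > c > d > 0 with a + b + c + d = 1. Then the classical mutual informations of the three 2×2 arrangements M = [[a,b],[c,d]], M^{(3,4)} = [[a,b],[d,c]] and M^{(2,4)} = [[a,d],[c,b]] satisfy I(M) < I(M^{(3,4)}) < I(M^{(2,4)}); equivalently, h(a+b) + h(a+c) < h(a+b) + h(a+d) < h(a+d) + h(a+c), i.e. h(a+c) < h(a+d) and h(a+b) < h(a+c). Consequently the minimum of classical mutual information over all 24 arrangements of (a,b,c,d) into a 2×2 matrix is attained at M and the maximum at M^{(2,4)}. -/
/-- `H x = -x * log x`, the entropy summand (with `H 0 = 0`). -/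
noncomputable def H (x : ℝ) : ℝ := -x * Real.log x

/-- The binary entropy function. -/
noncomputable def binEnt (x : ℝ) : ℝ := H x + H (1 - x)

/-- Classical mutual information of the 2×2 probability matrix `[[p,q],[r,s]]`. -/
noncomputable def CMI2 (p q r s : ℝ) : ℝ :=
  binEnt (p + q) + binEnt (p + r) - (H p + H q + H r + H s)

lemma binEnt_eq (x : ℝ) : binEnt x = Real.binEntropy x := by
  simp [binEnt, H, Real.binEntropy, Real.log_inv]; ring

lemma binEnt_one_sub (x : ℝ) : binEnt (1 - x) = binEnt x := by
  rw [binEnt_eq, binEnt_eq, Real.binEntropy_one_sub]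

lemma binEnt_lt {u v : ℝ} (h0 : 0 ≤ u) (huv : u < v) (hv : v ≤ 1/2) :
    binEnt u < binEnt v := by
  rw [binEnt_eq, binEnt_eq]
  exact Real.binEntropy_strictMonoOn ⟨h0, by norm_num; linarith⟩
    ⟨by linarith, by norm_num; linarith⟩ huv

/-- Proposition: for `a > b > c > d > 0` summing to 1,
`I([[a,b],[c,d]]) < I([[a,b],[d,c]]) < I([[a,d],[c,b]])`; consequently the minimum
of the CMI over all 24 arrangements of `(a,b,c,d)` into a 2×2 matrix is attained at
`[[a,b],[c,d]]` and the maximum at `[[a,d],[c,b]]`. -/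
theorem cmi_2x2_ordering (a b c d : ℝ)
    (hab : a > b) (hbc : b > c) (hcd : c > d) (hd : d > 0)
    (hsum : a + b + c + d = 1) :
    CMI2 a b c d < CMI2 a b d c ∧
    CMI2 a b d c < CMI2 a d c b ∧
    ∀ σ : Equiv.Perm (Fin 4),
      CMI2 a b c d ≤
          CMI2 (![a,b,c,d] (σ 0)) (![a,b,c,d] (σ 1)) (![a,b,c,d] (σ 2))
            (![a,b,c,d] (σ 3)) ∧
      CMI2 (![a,b,c,d] (σ 0)) (![a,b,c,d] (σ 1)) (![a,b,c,d] (σ 2))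
          (![a,b,c,d] (σ 3)) ≤ CMI2 a d c b := by
  -- basic equalities from symmetry binEnt (1 - x) = binEnt x
  have e1 : binEnt (c + d) = binEnt (a + b) := by
    rw [show c + d = 1 - (a + b) by linarith, binEnt_one_sub]
  have e1' : binEnt (d + c) = binEnt (a + b) := by rw [add_comm]; exact e1
  have e2 : binEnt (b + d) = binEnt (a + c) := by
    rw [show b + d = 1 - (a + c) by linarith, binEnt_one_sub]
  have e2' : binEnt (d + b) = binEnt (a + c) := by rw [add_comm]; exact e2
  have e3 : binEnt (b + c) = binEnt (a + d) := by
    rw [show b + c = 1 - (a + d) by linarith, binEnt_one_sub]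
  have e3' : binEnt (c + b) = binEnt (a + d) := by rw [add_comm]; exact e3
  have q1 : binEnt (b + a) = binEnt (a + b) := by rw [add_comm]
  have q2 : binEnt (c + a) = binEnt (a + c) := by rw [add_comm]
  have q3 : binEnt (d + a) = binEnt (a + d) := by rw [add_comm]
  -- strict inequalities
  have h12 : binEnt (a + b) < binEnt (a + c) := by
    rw [← e1, ← e2]
    exact binEnt_lt (by linarith) (by linarith) (by linarith)
  have h23 : binEnt (a + c) < binEnt (a + d) := by
    rcases le_or_gt (a + d) (1/2) with h | h
    · rw [← e2]
      exact binEnt_lt (by linarith) (by linarith) h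
    · rw [← e2, ← e3]
      exact binEnt_lt (by linarith) (by linarith) (by linarith)
  have master : ∀ p q r s : ℝ, H p + H q + H r + H s = H a + H b + H c + H d →
      binEnt (a + b) + binEnt (a + c) ≤ binEnt (p + q) + binEnt (p + r) →
      binEnt (p + q) + binEnt (p + r) ≤ binEnt (a + d) + binEnt (a + c) →
      CMI2 a b c d ≤ CMI2 p q r s ∧ CMI2 p q r s ≤ CMI2 a d c b := by
    intro p q r s hS hlo hhi
    unfold CMI2
    constructor <;> linarith
  refine ⟨by unfold CMI2; linarith, by unfold CMI2; linarith, ?_⟩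
  intro σ
  have h0 : σ 0 = 0 ∨ σ 0 = 1 ∨ σ 0 = 2 ∨ σ 0 = 3 := by omega
  have h1 : σ 1 = 0 ∨ σ 1 = 1 ∨ σ 1 = 2 ∨ σ 1 = 3 := by omega
  have h2 : σ 2 = 0 ∨ σ 2 = 1 ∨ σ 2 = 2 ∨ σ 2 = 3 := by omega
  have h3 : σ 3 = 0 ∨ σ 3 = 1 ∨ σ 3 = 2 ∨ σ 3 = 3 := by omega
  rcases h0 with h0|h0|h0|h0 <;> rcases h1 with h1|h1|h1|h1 <;>
    first
    | exact absurd (σ.injective (h0.trans h1.symm)) (by decide)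
    | (rcases h2 with h2|h2|h2|h2 <;>
        first
        | exact absurd (σ.injective (h0.trans h2.symm)) (by decide)
        | exact absurd (σ.injective (h1.trans h2.symm)) (by decide)
        | (rcases h3 with h3|h3|h3|h3 <;>
            first
            | exact absurd (σ.injective (h0.trans h3.symm)) (by decide)
            | exact absurd (σ.injective (h1.trans h3.symm)) (by decide)
            | exact absurd (σ.injective (h2.trans h3.symm)) (by decide)
            | (rw [h0, h1, h2, h3]
               simp only [Matrix.cons_val_zero, Matrix.cons_val_one, Matrix.head_cons,
                 Matrix.cons_val_two, Matrix.tail_cons, Matrix.cons_val_three]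
               exact master _ _ _ _ (by ring) (by linarith) (by linarith))))
end
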